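/- For every 0 ≤ t ≤ k < ω with k ≥ 1, the function ∀₂^{k−t} ⊔ liminf^{⊔t} is monotone, maps 1⃗ to 1, belongs to Limm0k't' for every pair t' ≤ k' < ω with k' < k or t' < t, and does not belong to Limm0kt. -/
import Mathlib


open scoped Classical

/-- An arity: `some n` is the finite arity `n ≥ 1`; `none` is the countably infinite arity ω. -/
abbrev Arity := Option ℕ+

/-- The index set of an arity. -/
abbrev Idx : Arity → Type
  | some n => Fin (n : ℕ)
  | none => ℕ

/-- A Boolean function of some arity `1 ≤ n ≤ ω`.  The input space `Idx a → Bool`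
carries the product topology (with `Bool` discrete), the product σ-algebra (= Borel),
and the coordinatewise partial order. -/
abbrev BFun : Type := Σ a : Arity, (Idx a → Bool) → Bool

/-- A clone: a set of Boolean functions of arities `1 ≤ n ≤ ω` containing all projections
and closed under composition. -/
structure IsClone (F : Set BFun) : Prop where
  proj : ∀ (a : Arity) (i : Idx a), (⟨a, fun x => x i⟩ : BFun) ∈ F
  comp : ∀ (a b : Arity) (g : (Idx a → Bool) → Bool) (f : Idx a → (Idx b → Bool) → Bool),
      (⟨a, g⟩ : BFun) ∈ F → (∀ i, (⟨b, f i⟩ : BFun) ∈ F) →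
      (⟨b, fun x => g fun i => f i x⟩ : BFun) ∈ F

/-- The clone generated by a set of Boolean functions. -/
def cloneGen (G : Set BFun) : Set BFun := ⋂₀ {F : Set BFun | IsClone F ∧ G ⊆ F}

/-- `f` has finite arity. -/
def finitary (f : BFun) : Prop := f.1 ≠ none

/-- `f` is Borel: the preimage of `1` is a Borel set. -/
def IsBorelFun (f : BFun) : Prop := MeasurableSet {x | f.2 x = true}

/-- `f` is continuous (equivalently, depends on only finitely many coordinates). -/
def IsContFun (f : BFun) : Prop := Continuous f.2

/-- `f(0⃗) = 0`. -/
def PresBot (f : BFun) : Prop := f.2 (fun _ => false) = false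

/-- `f(1⃗) = 1`. -/
def PresTop (f : BFun) : Prop := f.2 (fun _ => true) = true

/-- `f` vanishes on a neighborhood of `0⃗`, i.e. `0⃗` is not in the closure of `f⁻¹(1)`. -/
def VanishNearBot (f : BFun) : Prop := (fun _ => false) ∉ closure {x | f.2 x = true}

/-- `f` equals `1` on a neighborhood of `1⃗`, i.e. `1⃗` is not in the closure of `f⁻¹(0)`. -/
def OneNearTop (f : BFun) : Prop := (fun _ => true) ∉ closure {x | f.2 x = false}

/-- Countably infinite disjunction `⋁ : 2^ω → 2`. -/
noncomputable def bigOr : (ℕ → Bool) → Bool := fun x => decide (∃ i, x i = true)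

/-- Countably infinite conjunction `⋀ : 2^ω → 2`. -/
noncomputable def bigAnd : (ℕ → Bool) → Bool := fun x => decide (∀ i, x i = true)

/-- `liminf : 2^ω → 2`, equal to `1` iff all but finitely many bits are `1`. -/
noncomputable def liminfF : (ℕ → Bool) → Bool := fun x => decide (∃ N, ∀ j, N ≤ j → x j = true)

/-- `f ∈ Limm0kt`: there do not exist `k−t` elements of `f⁻¹(1)` together with `t`
elements of the closure of `f⁻¹(1)` whose coordinatewise meet is `0⃗`. -/
def MemLimm (k t : ℕ) {a : Arity} (f : (Idx a → Bool) → Bool) : Prop :=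
  ¬ ∃ (x : Fin (k - t) → Idx a → Bool) (y : Fin t → Idx a → Bool),
      (∀ r, f (x r) = true) ∧ (∀ s, y s ∈ closure {z | f z = true}) ∧
      (∀ i : Idx a, (∃ r, x r i = false) ∨ (∃ s, y s i = false))

/-- `∀₂` on an arbitrary index type: `1` iff at most one coordinate is `0`. -/
noncomputable def atMostOneFalse {ι : Type} (y : ι → Bool) : Bool :=
  decide (∀ i j : ι, y i = false → y j = false → i = j)

/-- For `0 < t ≤ k`, the function `∀₂^{k−t} ⊔ liminf^{⊔t} : 2^ω → 2`, via the coding of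
`2^{(k−t)+t×ω}` as `2^ω` sending the plain variables to positions `j < k−t` and the
`(r,q)`-th block variable (for `k−t ≤ r < k`, `q < ω`) to position `(k−t) + q·t + (r−(k−t))`:
it is `1` iff at most one of the `k` bits `x_0, …, x_{k−t−1}, ⋀_q x_{k−t,q}, …, ⋀_q x_{k−1,q}`
is `0`, and moreover all but finitely many of the bits are `1`. -/
noncomputable def sqcupFn (k t : ℕ) : (ℕ → Bool) → Bool := fun x =>
  (atMostOneFalse (fun i : Fin k =>
    if (i : ℕ) < k - t then x (i : ℕ)
    else decide (∀ q : ℕ, x ((k - t) + q * t + ((i : ℕ) - (k - t))) = true)))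
  && liminfF x

/-- `∀₂^{k−t} ⊔ liminf^{⊔t}` as a Boolean function: of arity `k` (equal to `∀^k₂`) when
`t = 0`, and of arity `ω` when `t > 0`. -/
noncomputable def sqcupBF (k : ℕ+) (t : ℕ) : BFun :=
  if t = 0 then ⟨some k, fun x => atMostOneFalse x⟩ else ⟨none, sqcupFn k t⟩

-- ==================== auxiliary lemmas ====================

lemma bool_le_false' {a b : Bool} (h : a ≤ b) (hb : b = false) : a = false := by
  subst hb; cases a
  · rfl
  · exact absurd h (by decide)

lemma aMOF_true_iff {ι : Type} (y : ι → Bool) :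
    atMostOneFalse y = true ↔ ∀ i j, y i = false → y j = false → i = j := by
  simp [atMostOneFalse]

lemma aMOF_of_le {ι : Type} {x y : ι → Bool} (h : x ≤ y) (hx : atMostOneFalse x = true) :
    atMostOneFalse y = true := by
  rw [aMOF_true_iff] at hx ⊢
  intro i j hi hj
  exact hx i j (bool_le_false' (h i) hi) (bool_le_false' (h j) hj)

lemma liminfF_true_iff (x : ℕ → Bool) :
    liminfF x = true ↔ ∃ N, ∀ j, N ≤ j → x j = true := by simp [liminfF]

/-- The `k` aggregated bits of an input to `sqcupFn k t`. -/
noncomputable def agg (k t : ℕ) (x : ℕ → Bool) (i : Fin k) : Bool :=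
  if (i : ℕ) < k - t then x i
  else decide (∀ q : ℕ, x ((k - t) + q * t + ((i : ℕ) - (k - t))) = true)

lemma sqcupFn_eq_true_iff (k t : ℕ) (x : ℕ → Bool) :
    sqcupFn k t x = true ↔ atMostOneFalse (agg k t x) = true ∧ liminfF x = true := by
  rw [sqcupFn, Bool.and_eq_true]; rfl

/-- The group (aggregated bit) to which coordinate `n` contributes. -/
def grp (k t n : ℕ) : ℕ := if n < k - t then n else (k - t) + (n - (k - t)) % t

lemma grp_lt (k t n : ℕ) (ht : t ≤ k) (htpos : 0 < t) : grp k t n < k := by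
  unfold grp; split
  · omega
  · have := Nat.mod_lt (n - (k - t)) htpos; omega

lemma grp_id (k t g : ℕ) (hg : g < k) : grp k t g = g := by
  unfold grp; split
  · rfl
  · have h1 : g - (k - t) < t := by omega
    rw [Nat.mod_eq_of_lt h1]; omega

lemma agg_false_of_coord (k t : ℕ) {x : ℕ → Bool} {n : ℕ} (hx : x n = false)
    (i : Fin k) (hi : (i : ℕ) = grp k t n) : agg k t x i = false := by
  unfold grp at hi
  by_cases h : n < k - t
  · rw [if_pos h] at hi
    rw [agg, if_pos (by omega : (i : ℕ) < k - t), hi]; exact hx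
  · rw [if_neg h] at hi
    rw [agg, if_neg (by omega : ¬ (i : ℕ) < k - t)]
    apply decide_eq_false
    intro hall
    have h1 := hall ((n - (k - t)) / t)
    have h2 : (k - t) + (n - (k - t)) / t * t + ((i : ℕ) - (k - t)) = n := by
      have h3 := Nat.div_add_mod (n - (k - t)) t
      have h4 : t * ((n - (k - t)) / t) = (n - (k - t)) / t * t := Nat.mul_comm _ _
      omega
    rw [h2, hx] at h1; exact Bool.false_ne_true h1

lemma closure_grp_eq (k t : ℕ) (ht : t ≤ k) (htpos : 0 < t) {w : ℕ → Bool}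
    (hw : w ∈ closure {z : ℕ → Bool | sqcupFn k t z = true}) {m n : ℕ}
    (hm : w m = false) (hn : w n = false) : grp k t m = grp k t n := by
  by_contra hne
  have hopen : IsOpen {v : ℕ → Bool | v m = false ∧ v n = false} := by
    have key : ∀ m : ℕ, IsOpen {v : ℕ → Bool | v m = false} := by
      intro m
      have he : {v : ℕ → Bool | v m = false} = (fun v : ℕ → Bool => v m) ⁻¹' {false} := by
        ext v; simp
      rw [he]
      exact IsOpen.preimage (continuous_apply m) (isOpen_discrete ({false} : Set Bool))
    exact (key m).inter (key n)
  obtain ⟨z, ⟨hzm, hzn⟩, hz⟩ := mem_closure_iff.1 hw _ hopen ⟨hm, hn⟩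
  have h1 := ((sqcupFn_eq_true_iff k t z).1 hz).1
  rw [aMOF_true_iff] at h1
  have e := h1 ⟨grp k t m, grp_lt k t m ht htpos⟩ ⟨grp k t n, grp_lt k t n ht htpos⟩
    (agg_false_of_coord k t hzm _ rfl) (agg_false_of_coord k t hzn _ rfl)
  exact hne (congrArg Fin.val e)

lemma sqcup_mono (k t : ℕ) : Monotone (sqcupFn k t) := by
  intro a b hab
  rw [Bool.le_iff_imp]
  intro h
  rw [sqcupFn_eq_true_iff] at h ⊢
  obtain ⟨h1, h2⟩ := h
  constructor
  · refine aMOF_of_le (fun i => ?_) h1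
    rw [Bool.le_iff_imp]
    intro hi
    unfold agg at hi ⊢
    by_cases hc : (i : ℕ) < k - t
    · rw [if_pos hc] at hi ⊢
      exact Bool.le_iff_imp.1 (hab _) hi
    · rw [if_neg hc] at hi ⊢
      rw [decide_eq_true_eq] at hi
      exact decide_eq_true (fun q => Bool.le_iff_imp.1 (hab _) (hi q))
  · rw [liminfF_true_iff] at h2 ⊢
    obtain ⟨N, hN⟩ := h2
    exact ⟨N, fun j hj => Bool.le_iff_imp.1 (hab j) (hN j hj)⟩

lemma sqcup_top (k t : ℕ) : sqcupFn k t (fun _ => true) = true := by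
  rw [sqcupFn_eq_true_iff]
  constructor
  · rw [aMOF_true_iff]
    intro i j hi hj
    exfalso
    unfold agg at hi
    by_cases hc : (i : ℕ) < k - t
    · rw [if_pos hc] at hi; exact Bool.false_ne_true hi.symm
    · rw [if_neg hc] at hi; simp at hi
  · rw [liminfF_true_iff]; exact ⟨0, fun j _ => rfl⟩

lemma sqcup_not_memLimm (k t : ℕ) (ht : t ≤ k) (htpos : 0 < t) :
    ∃ (x : Fin (k - t) → ℕ → Bool) (y : Fin t → ℕ → Bool),
      (∀ r, sqcupFn k t (x r) = true) ∧
      (∀ s, y s ∈ closure {z : ℕ → Bool | sqcupFn k t z = true}) ∧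
      (∀ i : ℕ, (∃ r, x r i = false) ∨ (∃ s, y s i = false)) := by
  refine ⟨fun r n => decide (n ≠ (r : ℕ)),
    fun s n => decide (¬ (k - t ≤ n ∧ (n - (k - t)) % t = (s : ℕ))), ?_, ?_, ?_⟩
  · intro r
    rw [sqcupFn_eq_true_iff]
    constructor
    · rw [aMOF_true_iff]
      have key : ∀ i : Fin k, agg k t (fun n => decide (n ≠ (r : ℕ))) i = false →
          (i : ℕ) = (r : ℕ) := by
        intro i hi
        unfold agg at hi
        by_cases hc : (i : ℕ) < k - t
        · rw [if_pos hc] at hi; simpa using hi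
        · rw [if_neg hc] at hi
          rw [decide_eq_false_iff_not] at hi
          push_neg at hi
          obtain ⟨q, hq⟩ := hi
          exfalso
          have hq' : (k - t) + q * t + ((i : ℕ) - (k - t)) = (r : ℕ) := by
            simpa using hq
          have hr := r.isLt
          omega
      intro i j hi hj
      exact Fin.ext ((key i hi).trans (key j hj).symm)
    · rw [liminfF_true_iff]
      exact ⟨(r : ℕ) + 1, fun j hj => by simp only [decide_eq_true_eq]; omega⟩
  · intro s
    set Y : ℕ → Bool := fun n => decide (¬ (k - t ≤ n ∧ (n - (k - t)) % t = (s : ℕ))) with hY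
    have happ : ∀ N : ℕ, sqcupFn k t (fun n => Y n || decide (N ≤ n)) = true := by
      intro N
      rw [sqcupFn_eq_true_iff]
      constructor
      · rw [aMOF_true_iff]
        have key : ∀ i : Fin k, agg k t (fun n => Y n || decide (N ≤ n)) i = false →
            (i : ℕ) = k - t + (s : ℕ) := by
          intro i hi
          unfold agg at hi
          by_cases hc : (i : ℕ) < k - t
          · rw [if_pos hc] at hi
            rw [Bool.or_eq_false_iff] at hi
            have hYi : Y (i : ℕ) = false := hi.1
            rw [hY, decide_eq_false_iff_not, not_not] at hYi
            omega
          · rw [if_neg hc] at hi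
            rw [decide_eq_false_iff_not] at hi
            push_neg at hi
            obtain ⟨q, hq⟩ := hi
            have hq' : (Y ((k - t) + q * t + ((i : ℕ) - (k - t))) ||
                decide (N ≤ (k - t) + q * t + ((i : ℕ) - (k - t)))) = false := by
              simpa using hq
            rw [Bool.or_eq_false_iff] at hq'
            have hYc := hq'.1
            rw [hY, decide_eq_false_iff_not, not_not] at hYc
            obtain ⟨-, hmod⟩ := hYc
            have hd : (i : ℕ) - (k - t) < t := by
              have := i.isLt; omega
            have hm2 : ((k - t) + q * t + ((i : ℕ) - (k - t)) - (k - t)) % t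
                = (i : ℕ) - (k - t) := by
              have he : (k - t) + q * t + ((i : ℕ) - (k - t)) - (k - t)
                  = ((i : ℕ) - (k - t)) + q * t := by omega
              rw [he, Nat.add_mul_mod_self_right, Nat.mod_eq_of_lt hd]
            rw [hm2] at hmod
            omega
        intro i j hi hj
        exact Fin.ext ((key i hi).trans (key j hj).symm)
      · rw [liminfF_true_iff]
        refine ⟨N, fun j hj => ?_⟩
        have : decide (N ≤ j) = true := decide_eq_true hj
        rw [this, Bool.or_true]
    have htend : Filter.Tendsto (fun N => fun n => Y n || decide (N ≤ n))
        Filter.atTop (nhds Y) := by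
      rw [tendsto_pi_nhds]
      intro n
      apply Filter.Tendsto.congr' _ (tendsto_const_nhds (x := Y n))
      filter_upwards [Filter.eventually_ge_atTop (n + 1)] with N hN
      have : decide (N ≤ n) = false := by
        rw [decide_eq_false_iff_not]; omega
      rw [this, Bool.or_false]
    exact mem_closure_of_tendsto htend (Filter.Eventually.of_forall happ)
  · intro n
    by_cases h : n < k - t
    · exact Or.inl ⟨⟨n, h⟩, by simp⟩
    · refine Or.inr ⟨⟨(n - (k - t)) % t, Nat.mod_lt _ htpos⟩, ?_⟩
      rw [decide_eq_false_iff_not, not_not]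
      exact ⟨by omega, rfl⟩

lemma sqcup_memLimm_klt (k t k' t' : ℕ) (ht : t ≤ k) (htpos : 0 < t)
    (ht' : t' ≤ k') (hk' : k' < k)
    (x : Fin (k' - t') → ℕ → Bool) (y : Fin t' → ℕ → Bool)
    (hx : ∀ r, sqcupFn k t (x r) = true)
    (hy : ∀ s, y s ∈ closure {z : ℕ → Bool | sqcupFn k t z = true})
    (hcov : ∀ i : ℕ, (∃ r, x r i = false) ∨ (∃ s, y s i = false)) : False := by
  have hsel : ∀ g : Fin k, ∃ w : Fin (k' - t') ⊕ Fin t', Sum.elim x y w (g : ℕ) = false := by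
    intro g
    rcases hcov (g : ℕ) with ⟨r, hr⟩ | ⟨s, hs⟩
    exacts [⟨Sum.inl r, hr⟩, ⟨Sum.inr s, hs⟩]
  choose F hF using hsel
  have hmem : ∀ w : Fin (k' - t') ⊕ Fin t',
      Sum.elim x y w ∈ closure {z : ℕ → Bool | sqcupFn k t z = true} := by
    rintro (r | s)
    · exact subset_closure (hx r)
    · exact hy s
  have hinj : Function.Injective F := by
    intro g1 g2 he
    have h1 := hF g1
    have h2 := hF g2
    rw [he] at h1
    have h3 := closure_grp_eq k t ht htpos (hmem (F g2)) h1 h2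
    rw [grp_id k t _ g1.isLt, grp_id k t _ g2.isLt] at h3
    exact Fin.ext h3
  have hcard := Fintype.card_le_of_injective F hinj
  simp only [Fintype.card_fin, Fintype.card_sum] at hcard
  omega

lemma sqcup_memLimm_tlt (k t k' t' : ℕ) (ht : t ≤ k) (htpos : 0 < t) (ht'lt : t' < t)
    (x : Fin (k' - t') → ℕ → Bool) (y : Fin t' → ℕ → Bool)
    (hx : ∀ r, sqcupFn k t (x r) = true)
    (hy : ∀ s, y s ∈ closure {z : ℕ → Bool | sqcupFn k t z = true})
    (hcov : ∀ i : ℕ, (∃ r, x r i = false) ∨ (∃ s, y s i = false)) : False := by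
  have hblock : ∀ r : Fin t, ∃ s : Fin t', ∃ n : ℕ,
      grp k t n = k - t + (r : ℕ) ∧ y s n = false := by
    intro r
    by_contra hno
    push_neg at hno
    have hN : ∀ j : Fin (k' - t'), ∃ N, ∀ m, N ≤ m → x j m = true := by
      intro j
      have h2 := ((sqcupFn_eq_true_iff k t (x j)).1 (hx j)).2
      rwa [liminfF_true_iff] at h2
    choose N hNs using hN
    obtain ⟨M, hMb⟩ : ∃ M : ℕ, ∀ j, N j ≤ M :=
      ⟨Finset.univ.sup N, fun j => Finset.le_sup (Finset.mem_univ j)⟩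
    have hMt : M ≤ M * t := Nat.le_mul_of_pos_right M htpos
    have hgrc : grp k t ((k - t) + M * t + (r : ℕ)) = k - t + (r : ℕ) := by
      unfold grp
      rw [if_neg (by omega)]
      congr 1
      have he : (k - t) + M * t + (r : ℕ) - (k - t) = (r : ℕ) + M * t := by omega
      rw [he, Nat.add_mul_mod_self_right, Nat.mod_eq_of_lt r.isLt]
    rcases hcov ((k - t) + M * t + (r : ℕ)) with ⟨j, hj⟩ | ⟨s, hs⟩
    · have hMc : N j ≤ (k - t) + M * t + (r : ℕ) := by
        have h1 := hMb j
        omega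
      rw [hNs j _ hMc] at hj
      exact Bool.false_ne_true hj.symm
    · exact hno s _ hgrc hs
  choose G n hGn hGf using hblock
  have hinj : Function.Injective G := by
    intro r1 r2 he
    have h2 := hGf r2
    rw [← he] at h2
    have h3 := closure_grp_eq k t ht htpos (hy (G r1)) (hGf r1) h2
    rw [hGn r1, hGn r2] at h3
    exact Fin.ext (by omega)
  have hcard := Fintype.card_le_of_injective G hinj
  simp only [Fintype.card_fin] at hcard
  omega

-- ==================== the t = 0 (finitary) case ====================

lemma aMOF_not_memLimm (k : ℕ) :
    ∃ (x : Fin (k - 0) → Fin k → Bool) (y : Fin 0 → Fin k → Bool),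
      (∀ r, atMostOneFalse (x r) = true) ∧
      (∀ s, y s ∈ closure {z : Fin k → Bool | atMostOneFalse z = true}) ∧
      (∀ i : Fin k, (∃ r, x r i = false) ∨ (∃ s, y s i = false)) := by
  refine ⟨fun r i => decide (i ≠ r), fun s => s.elim0, ?_, fun s => s.elim0, ?_⟩
  · intro r
    rw [aMOF_true_iff]
    intro i j hi hj
    have hi' : i = r := by simpa using hi
    have hj' : j = r := by simpa using hj
    rw [hi', hj']
  · intro i
    exact Or.inl ⟨i, by simp⟩

lemma aMOF_memLimm (k k' t' : ℕ) (ht' : t' ≤ k') (hk' : k' < k)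
    (x : Fin (k' - t') → Fin k → Bool) (y : Fin t' → Fin k → Bool)
    (hx : ∀ r, atMostOneFalse (x r) = true)
    (hy : ∀ s, y s ∈ closure {z : Fin k → Bool | atMostOneFalse z = true})
    (hcov : ∀ i : Fin k, (∃ r, x r i = false) ∨ (∃ s, y s i = false)) : False := by
  have hy' : ∀ s, atMostOneFalse (y s) = true := by
    intro s; have h := hy s
    rwa [(isClosed_discrete {z : Fin k → Bool | atMostOneFalse z = true}).closure_eq] at h
  have hsel : ∀ g : Fin k, ∃ w : Fin (k' - t') ⊕ Fin t', Sum.elim x y w g = false := by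
    intro g
    rcases hcov g with ⟨r, hr⟩ | ⟨s, hs⟩
    exacts [⟨Sum.inl r, hr⟩, ⟨Sum.inr s, hs⟩]
  choose F hF using hsel
  have hAM : ∀ w : Fin (k' - t') ⊕ Fin t', atMostOneFalse (Sum.elim x y w) = true := by
    rintro (r | s)
    · exact hx r
    · exact hy' s
  have hinj : Function.Injective F := by
    intro g1 g2 he
    have h1 := hF g1
    rw [he] at h1
    exact (aMOF_true_iff _).1 (hAM (F g2)) g1 g2 h1 (hF g2)
  have hcard := Fintype.card_le_of_injective F hinj
  simp only [Fintype.card_fin, Fintype.card_sum] at hcard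
  omega

/-- For `0 ≤ t ≤ k`, `k ≥ 1`: the function `∀₂^{k−t} ⊔ liminf^{⊔t}` is monotone, maps `1⃗`
to `1`, belongs to `Limm0k't'` for all `t' ≤ k'` with `k' < k` or `t' < t`, and does not
belong to `Limm0kt`. -/
theorem sqcup_mem_Limm_strictly (k : ℕ+) (t : ℕ) (ht : t ≤ (k : ℕ)) :
    Monotone (sqcupBF k t).2 ∧
    (sqcupBF k t).2 (fun _ => true) = true ∧
    (∀ k' t' : ℕ, t' ≤ k' → (k' < (k : ℕ) ∨ t' < t) → MemLimm k' t' (sqcupBF k t).2) ∧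
    ¬ MemLimm (k : ℕ) t (sqcupBF k t).2 := by
  by_cases ht0 : t = 0
  · subst ht0
    have hBF : sqcupBF k 0 = ⟨some k, fun x => atMostOneFalse x⟩ := if_pos rfl
    rw [hBF]
    refine ⟨?_, ?_, ?_, ?_⟩
    · intro a b hab
      rw [Bool.le_iff_imp]
      exact aMOF_of_le hab
    · rw [aMOF_true_iff]
      intro i j hi hj
      exact absurd hi (by simp)
    · intro k' t' ht' hlt
      have hk' : k' < (k : ℕ) := by omega
      rintro ⟨x, y, hx, hy, hcov⟩
      exact aMOF_memLimm (k : ℕ) k' t' ht' hk' x y hx hy hcov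
    · intro hM
      exact hM (aMOF_not_memLimm (k : ℕ))
  · have htpos : 0 < t := Nat.pos_of_ne_zero ht0
    have hBF : sqcupBF k t = ⟨none, sqcupFn (k : ℕ) t⟩ := if_neg ht0
    rw [hBF]
    refine ⟨sqcup_mono (k : ℕ) t, sqcup_top (k : ℕ) t, ?_, ?_⟩
    · intro k' t' ht' hlt
      rintro ⟨x, y, hx, hy, hcov⟩
      rcases hlt with hk' | ht'lt
      · exact sqcup_memLimm_klt (k : ℕ) t k' t' ht htpos ht' hk' x y hx hy hcov
      · exact sqcup_memLimm_tlt (k : ℕ) t k' t' ht htpos ht'lt x y hx hy hcov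
    · intro hM
      exact hM (sqcup_not_memLimm (k : ℕ) t ht htpos)
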